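/- Suppose G is a subgroup of the group G_n of monomial matrices. Let (a_{ij}) ∈ F^{γ×k} be a matrix whose columns are pairwise different and define t'_i = a_{i1} f_1 + ... + a_{ik} f_k for 1 ≤ i ≤ γ. Then t'_1, ..., t'_γ form a minimal separating set for F_q[V]^G consisting of invariants of degree at most n(q−1). -/

import Mathlib

open MvPolynomial

/-- The substitution action of a matrix `M` on polynomials, so that
`(polyAct M f)(v) = f (M.mulVec v)`.  Taking `M = g⁻¹` gives the action
`(g · f)(v) = f (g⁻¹ · v)` of a matrix group on the coordinate ring. -/
noncomputable def polyAct {F : Type*} [CommSemiring F] {n : ℕ}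
    (M : Matrix (Fin n) (Fin n) F) (f : MvPolynomial (Fin n) F) : MvPolynomial (Fin n) F :=
  aeval (fun i => ∑ j, C (M i j) * X j) f

/-- `f_w = (-1)^n ∏_i ∏_{a ∈ F \ {w_i}} (x_i - a)`, the indicator polynomial of `w`. -/
noncomputable def fW {F : Type*} [Field F] [Fintype F] [DecidableEq F] {n : ℕ}
    (w : Fin n → F) : MvPolynomial (Fin n) F :=
  (-1) ^ n * ∏ i, ∏ a ∈ (Finset.univ \ {w i}), (X i - C a)

/-- `f_j = ∑_{w ∈ W_j} f_w`, the indicator polynomial of the subset `W ⊆ V`. -/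
noncomputable def fOrb {F : Type*} [Field F] [Fintype F] [DecidableEq F] {n : ℕ}
    (W : Set (Fin n → F)) : MvPolynomial (Fin n) F :=
  ∑ w ∈ (Set.toFinite W).toFinset, fW w

/-- `n_j = ∏_{g ∈ G} (g · f)`, where `(g · f)(v) = f(g⁻¹ · v)`. -/
noncomputable def nInvPoly {F : Type*} [Field F] [Fintype F] {n : ℕ}
    (G : Subgroup (Matrix.GeneralLinearGroup (Fin n) F)) (f : MvPolynomial (Fin n) F) :
    MvPolynomial (Fin n) F :=
  letI : Fintype G := Fintype.ofFinite G
  ∏ g : G, polyAct (((g : Matrix.GeneralLinearGroup (Fin n) F)⁻¹ :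
      Matrix.GeneralLinearGroup (Fin n) F) : Matrix (Fin n) (Fin n) F) f

/-- The Reynolds average `h = (1/|G|) ∑_{g ∈ G} (g · f)`. -/
noncomputable def reynolds {F : Type*} [Field F] [Fintype F] {n : ℕ}
    (G : Subgroup (Matrix.GeneralLinearGroup (Fin n) F)) (f : MvPolynomial (Fin n) F) :
    MvPolynomial (Fin n) F :=
  letI : Fintype G := Fintype.ofFinite G
  C ((Nat.card G : F)⁻¹) * ∑ g : G, polyAct (((g : Matrix.GeneralLinearGroup (Fin n) F)⁻¹ :
      Matrix.GeneralLinearGroup (Fin n) F) : Matrix (Fin n) (Fin n) F) f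

/-- A monomial matrix: exactly one nonzero entry in each row and in each column. -/
def IsMonomialMatrix {F : Type*} [Zero F] {n : ℕ} (M : Matrix (Fin n) (Fin n) F) : Prop :=
  (∀ i, ∃! j, M i j ≠ 0) ∧ (∀ j, ∃! i, M i j ≠ 0)

/-!
Since `∏_{a ≠ b} (X - a) = (X - b)^(q-1) - 1`, the polynomial `f_w` is Mathlib's
`MvPolynomial.indicator w`, so `f_j` is the indicator function of the orbit `W_j`, of degree at most
`q - 1` in each variable. A monomial matrix acts by `x_i ↦ c_i x_{σ i}`, which sends the
indicator of a point to the indicator of a point (`c_i^(q-1) = 1`); hence it permutes the `f_w`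
with `w` in an orbit and fixes `f_j`. The invariant `t'_i` takes the value `a_{ij}` on `W_j`, so
distinct columns separate the orbits. Conversely, `r` invariants separating the `k` orbits embed
the orbits into `F^r`, whence `k ≤ q^r`.
-/

open Finset Matrix Function

namespace Polynomial

variable {F : Type*} [Field F] [Fintype F] [DecidableEq F]

theorem prod_sdiff_singleton_X_sub_C (b : F) :
    ∏ a ∈ univ \ {b}, (X - C a : F[X]) = (X - C b) ^ (Fintype.card F - 1) - 1 := by
  have hq : 0 < Fintype.card F - 1 := Nat.sub_pos_of_lt Fintype.one_lt_card
  have hprod : (∏ a ∈ univ \ {b}, (X - C a : F[X])).Monic := monic_prod_X_sub_C (fun a => a) _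
  have hmonic : ((X - C b) ^ (Fintype.card F - 1) - 1 : F[X]).Monic :=
    (monic_X_sub_C b).pow _ |>.sub_of_left (by
      rw [degree_one, degree_pow, degree_X_sub_C, nsmul_one]; exact_mod_cast hq)
  have hdeg : (∏ a ∈ univ \ {b}, (X - C a : F[X])).degree = (#(univ \ {b}) : WithBot ℕ) := by
    rw [degree_eq_natDegree hprod.ne_zero, natDegree_finsetProd_X_sub_C_eq_card]
  refine eq_of_degree_le_of_eval_finset_eq (univ \ {b}) hdeg.le ?_ ?_ ?_
  · rw [hdeg, degree_eq_natDegree hmonic.ne_zero, natDegree_sub_eq_left_of_natDegree_lt] <;>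
      simp [card_sdiff, hq]
  · rw [hprod.leadingCoeff, hmonic.leadingCoeff]
  · intro a ha
    have hab : a - b ≠ 0 := sub_ne_zero.mpr (by simpa using ha)
    simp [eval_prod, FiniteField.pow_card_sub_one_eq_one _ hab, prod_eq_zero ha]

end Polynomial

namespace MvPolynomial

variable {F σ : Type*} [Field F] [Fintype F] [Fintype σ]

theorem totalDegree_indicator_le (c : σ → F) :
    (indicator c).totalDegree ≤ Fintype.card σ * (Fintype.card F - 1) := by
  refine (totalDegree_le_degrees_card _).trans ((Multiset.card_mono (degrees_indicator c)).trans ?_)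
  simp [mul_comm]

end MvPolynomial

section

variable {F : Type*} [Field F] [Fintype F] [DecidableEq F] {n : ℕ}

theorem fW_eq_indicator (w : Fin n → F) : fW w = indicator w := by
  have hfactor : ∀ i, ∏ a ∈ univ \ {w i}, (X i - C a) =
      (X i - C (w i)) ^ (Fintype.card F - 1) - (1 : MvPolynomial (Fin n) F) := fun i => by
    simpa using congrArg (Polynomial.aeval (X i : MvPolynomial (Fin n) F))
      (Polynomial.prod_sdiff_singleton_X_sub_C (w i))
  simp_rw [fW, indicator, hfactor, ← neg_sub (1 : MvPolynomial (Fin n) F), prod_neg, card_univ,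
    Fintype.card_fin, ← mul_assoc, ← pow_add, Even.neg_one_pow ⟨n, rfl⟩, one_mul]

theorem eval_fOrb (W : Set (Fin n → F)) (v : Fin n → F) :
    eval v (fOrb W) = W.indicator 1 v := by
  classical
  simp only [fOrb, fW_eq_indicator, map_sum]
  by_cases hv : v ∈ W
  · rw [Set.indicator_of_mem hv, sum_eq_single v, eval_indicator_apply_eq_one, Pi.one_apply]
    · exact fun w _ hwv => eval_indicator_apply_eq_zero v w (Ne.symm hwv)
    · simp [hv]
  · rw [Set.indicator_of_notMem hv]
    exact sum_eq_zero fun w hw => eval_indicator_apply_eq_zero v w (by rintro rfl; simp_all)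

theorem totalDegree_fOrb_le (W : Set (Fin n → F)) :
    (fOrb W).totalDegree ≤ n * (Fintype.card F - 1) := by
  refine (totalDegree_finsetSum _ _).trans (Finset.sup_le fun w _ => ?_)
  simpa [fW_eq_indicator] using totalDegree_indicator_le w

end

theorem Matrix.mulVec_apply_eq_of_forall_ne_eq_zero {ι R : Type*} [Fintype ι]
    [NonUnitalNonAssocSemiring R] {M : Matrix ι ι R} {i j₀ : ι} (h : ∀ j, j ≠ j₀ → M i j = 0)
    (v : ι → R) : (M *ᵥ v) i = M i j₀ * v j₀ :=
  Fintype.sum_eq_single j₀ fun j hj => by simp [h j hj]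

namespace IsMonomialMatrix

theorem exists_perm {F : Type*} [Zero F] {n : ℕ} {M : Matrix (Fin n) (Fin n) F}
    (hM : IsMonomialMatrix M) :
    ∃ σ : Equiv.Perm (Fin n), ∀ i, M i (σ i) ≠ 0 ∧ ∀ j, j ≠ σ i → M i j = 0 := by
  choose σ hσ huniq using hM.1
  have hinj : Injective σ := fun i₁ i₂ h => (hM.2 (σ i₁)).unique (hσ i₁) (h ▸ hσ i₂)
  refine ⟨Equiv.ofBijective σ hinj.bijective_of_finite, fun i => ⟨hσ i, fun j hj => ?_⟩⟩
  by_contra h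
  exact hj (huniq i j h)

theorem mulVec_injective {F : Type*} [Field F] {n : ℕ} {M : Matrix (Fin n) (Fin n) F}
    (hM : IsMonomialMatrix M) : Injective M.mulVec := by
  obtain ⟨σ, hσ⟩ := hM.exists_perm
  intro v v' h
  funext j
  obtain ⟨i, rfl⟩ := σ.surjective j
  simpa [mulVec_apply_eq_of_forall_ne_eq_zero (hσ i).2, (hσ i).1] using congrFun h i

end IsMonomialMatrix

theorem polyAct_sum_C_mul {F ι : Type*} [CommSemiring F] [Fintype ι] {n : ℕ}
    (M : Matrix (Fin n) (Fin n) F) (a : ι → F) (f : ι → MvPolynomial (Fin n) F) :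
    polyAct M (∑ j, C (a j) * f j) = ∑ j, C (a j) * polyAct M (f j) := by
  simp [polyAct]

section

variable {F : Type*} [Field F] [Fintype F] {n : ℕ} {M : Matrix (Fin n) (Fin n) F}

theorem polyAct_indicator_mulVec (hM : IsMonomialMatrix M) (v : Fin n → F) :
    polyAct M (indicator (M *ᵥ v)) = indicator v := by
  obtain ⟨σ, hσ⟩ := hM.exists_perm
  have hrow :
      ∀ i, ∑ j, C (M i j) * X j = C (M i (σ i)) * (X (σ i) : MvPolynomial (Fin n) F) :=
    fun i => sum_eq_single (σ i) (fun j _ hj => by simp [(hσ i).2 j hj]) (by simp)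
  have hfactor : ∀ i, (C (M i (σ i)) * X (σ i) - C ((M *ᵥ v) i)) ^ (Fintype.card F - 1) =
      (X (σ i) - C (v (σ i)) : MvPolynomial (Fin n) F) ^ (Fintype.card F - 1) := fun i => by
    rw [mulVec_apply_eq_of_forall_ne_eq_zero (hσ i).2, C_mul, ← mul_sub, mul_pow, ← C_pow,
      FiniteField.pow_card_sub_one_eq_one _ (hσ i).1, C_1, one_mul]
  simp only [polyAct, indicator, map_prod, map_sub, map_one, map_pow, aeval_X, aeval_C,
    algebraMap_eq, hrow, hfactor]
  exact Equiv.prod_comp σ fun j => 1 - (X j - C (v j)) ^ (Fintype.card F - 1)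

theorem polyAct_fOrb [DecidableEq F] (hM : IsMonomialMatrix M) {W : Set (Fin n → F)}
    (hW : ∀ v, M *ᵥ v ∈ W ↔ v ∈ W) : polyAct M (fOrb W) = fOrb W := by
  let e : (Fin n → F) ≃ (Fin n → F) := .ofBijective _ hM.mulVec_injective.bijective_of_finite
  simp only [fOrb, fW_eq_indicator, polyAct, map_sum]
  refine (sum_equiv e (fun v => by simp [e, hW]) fun v _ => ?_).symm
  exact (polyAct_indicator_mulVec hM v).symm

end

theorem Fintype.clog_card_le_of_injective {α β ι : Type*} [Fintype α] [Fintype β] [Fintype ι]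
    [DecidableEq ι] (hβ : 1 < Fintype.card β) {f : α → ι → β} (hf : Injective f) :
    Nat.clog (Fintype.card β) (Fintype.card α) ≤ Fintype.card ι :=
  (Nat.clog_le_iff_le_pow hβ).mpr (by simpa using Fintype.card_le_of_injective f hf)

section Orbits

variable {F : Type*} [Field F] {n : ℕ} (G : Subgroup (GL (Fin n) F))

def matrixOrbit (w : Fin n → F) : Set (Fin n → F) :=
  {u | ∃ g ∈ G, (g : Matrix (Fin n) (Fin n) F) *ᵥ w = u}

variable {G}

theorem mem_matrixOrbit_self (w : Fin n → F) : w ∈ matrixOrbit G w :=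
  ⟨1, G.one_mem, by simp⟩

theorem mulVec_mem_matrixOrbit_iff {g : GL (Fin n) F} (hg : g ∈ G) {v w : Fin n → F} :
    (g : Matrix (Fin n) (Fin n) F) *ᵥ v ∈ matrixOrbit G w ↔ v ∈ matrixOrbit G w := by
  constructor
  · rintro ⟨h, hh, hv⟩
    refine ⟨g⁻¹ * h, G.mul_mem (G.inv_mem hg) hh, ?_⟩
    rw [Units.val_mul, ← mulVec_mulVec, hv, mulVec_mulVec, ← Units.val_mul, inv_mul_cancel,
      Units.val_one, one_mulVec]
  · rintro ⟨h, hh, rfl⟩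
    exact ⟨g * h, G.mul_mem hg hh, by rw [Units.val_mul, mulVec_mulVec]⟩

theorem mem_matrixOrbit_of_mem_matrixOrbit {u v w : Fin n → F} (hu : u ∈ matrixOrbit G w)
    (hv : v ∈ matrixOrbit G w) : v ∈ matrixOrbit G u := by
  obtain ⟨g, hg, rfl⟩ := hu
  obtain ⟨h, hh, rfl⟩ := hv
  refine ⟨h * g⁻¹, G.mul_mem hh (G.inv_mem hg), ?_⟩
  rw [mulVec_mulVec, ← Units.val_mul, inv_mul_cancel_right]

end Orbits

section OrbitPartition

variable {F : Type*} [Field F] [Fintype F] {n : ℕ}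
  {G : Subgroup (GL (Fin n) F)} {ι : Type*} [Fintype ι] {W : ι → Set (Fin n → F)}

theorem eval_sum_C_mul_fOrb [DecidableEq F] (hW : Pairwise (Disjoint on W)) (a : ι → F) {j : ι}
    {u : Fin n → F} (hu : u ∈ W j) : eval u (∑ j', C (a j') * fOrb (W j')) = a j := by
  rw [map_sum, Fintype.sum_eq_single j fun j' hj' => ?_]
  · simp [eval_fOrb, hu]
  · simp [eval_fOrb, Set.indicator_of_notMem ((hW hj').symm.notMem_of_mem_left hu)]

theorem totalDegree_sum_C_mul_fOrb_le [DecidableEq F] (W : ι → Set (Fin n → F))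
    (a : ι → F) :
    (∑ j, C (a j) * fOrb (W j)).totalDegree ≤ n * (Fintype.card F - 1) := by
  refine (totalDegree_finsetSum _ _).trans (Finset.sup_le fun j _ => ?_)
  rw [C_mul']
  exact (totalDegree_smul_le _ _).trans (totalDegree_fOrb_le _)

theorem polyAct_sum_C_mul_fOrb [DecidableEq F] (horb : ∀ j, ∃ w, W j = matrixOrbit G w)
    (hmono : ∀ g ∈ G, IsMonomialMatrix (g : Matrix (Fin n) (Fin n) F))
    {g : GL (Fin n) F} (hg : g ∈ G) (a : ι → F) :
    polyAct (g : Matrix (Fin n) (Fin n) F) (∑ j, C (a j) * fOrb (W j)) =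
      ∑ j, C (a j) * fOrb (W j) := by
  have hstable (j : ι) (v : Fin n → F) : (g : Matrix (Fin n) (Fin n) F) *ᵥ v ∈ W j ↔ v ∈ W j := by
    obtain ⟨w, hw⟩ := horb j
    exact hw ▸ mulVec_mem_matrixOrbit_iff hg
  simp only [polyAct_sum_C_mul, polyAct_fOrb (hmono g hg) (hstable _)]

theorem exists_eval_sum_C_mul_fOrb_ne [DecidableEq F] {κ : Type*}
    (horb : ∀ j, ∃ w, W j = matrixOrbit G w)
    (hcover : ∀ v, ∃ j, v ∈ W j) (hdisj : Pairwise (Disjoint on W)) {a : κ → ι → F}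
    (hcols : ∀ j₁ j₂, j₁ ≠ j₂ → ∃ i, a i j₁ ≠ a i j₂) {u v : Fin n → F}
    (huv : v ∉ matrixOrbit G u) :
    ∃ i, eval u (∑ j, C (a i j) * fOrb (W j)) ≠ eval v (∑ j, C (a i j) * fOrb (W j)) := by
  obtain ⟨ju, hu⟩ := hcover u
  obtain ⟨jv, hv⟩ := hcover v
  have hne : ju ≠ jv := by
    rintro rfl
    obtain ⟨w, hw⟩ := horb ju
    exact huv (mem_matrixOrbit_of_mem_matrixOrbit (hw ▸ hu) (hw ▸ hv))
  obtain ⟨i, hi⟩ := hcols ju jv hne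
  exact ⟨i, by rwa [eval_sum_C_mul_fOrb hdisj _ hu, eval_sum_C_mul_fOrb hdisj _ hv]⟩

theorem clog_card_le_of_separating (horb : ∀ j, ∃ w, W j = matrixOrbit G w)
    (hdisj : Pairwise (Disjoint on W)) {r : ℕ} {l : Fin r → MvPolynomial (Fin n) F}
    (hsep : ∀ u v, v ∉ matrixOrbit G u → ∃ i, eval u (l i) ≠ eval v (l i)) :
    Nat.clog (Fintype.card F) (Fintype.card ι) ≤ r := by
  choose w hw using horb
  have hinj : Injective fun j i => eval (w j) (l i) := by
    intro j₁ j₂ h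
    by_contra hne
    refine (hsep (w j₁) (w j₂) fun hrel => ?_).elim fun i hi => hi (congrFun h i)
    have hw₁ : w j₂ ∈ W j₁ := hw j₁ ▸ hrel
    exact (hdisj hne).notMem_of_mem_left hw₁ (hw j₂ ▸ mem_matrixOrbit_self _)
  simpa using Fintype.clog_card_le_of_injective Fintype.one_lt_card hinj

end OrbitPartition

/-- if `G` consists of monomial matrices and `(a i j)` has pairwise
different columns, then `t'_i = a_{i1} f_1 + ⋯ + a_{ik} f_k` (`1 ≤ i ≤ γ`) form a
minimal separating set for `F_q[V]^G` consisting of invariants of degree ≤ `n(q-1)`. -/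
theorem stmt7 {q n k : ℕ} (F : Type*) [Field F] [Fintype F] [DecidableEq F]
    (hq : Fintype.card F = q)
    (G : Subgroup (Matrix.GeneralLinearGroup (Fin n) F))
    (W : Fin k → Set (Fin n → F))
    (horb : ∀ j, ∃ w : Fin n → F, W j =
      {u | ∃ g ∈ G, (g : Matrix (Fin n) (Fin n) F).mulVec w = u})
    (hcover : ∀ v : Fin n → F, ∃ j, v ∈ W j)
    (hdisj : ∀ j₁ j₂, j₁ ≠ j₂ → Disjoint (W j₁) (W j₂))
    (hmono : ∀ g ∈ G, IsMonomialMatrix ((g : Matrix.GeneralLinearGroup (Fin n) F) :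
        Matrix (Fin n) (Fin n) F))
    (a : Fin (Nat.clog q k) → Fin k → F)
    (hcols : ∀ j₁ j₂ : Fin k, j₁ ≠ j₂ → ∃ i, a i j₁ ≠ a i j₂) :
    let t' : Fin (Nat.clog q k) → MvPolynomial (Fin n) F :=
      fun i => ∑ j, C (a i j) * fOrb (W j)
    -- the t'_i are invariants
    (∀ i, ∀ g ∈ G,
      polyAct ((g⁻¹ : Matrix.GeneralLinearGroup (Fin n) F) : Matrix (Fin n) (Fin n) F)
        (t' i) = t' i) ∧
    -- the t'_i form a separating set
    (∀ u v : Fin n → F,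
      (¬ ∃ g ∈ G, (g : Matrix (Fin n) (Fin n) F).mulVec u = v) →
      ∃ i, eval u (t' i) ≠ eval v (t' i)) ∧
    -- degree bound n(q-1)
    (∀ i, (t' i).totalDegree ≤ n * (q - 1)) ∧
    -- minimality: no separating set of invariants has fewer than γ elements
    (∀ (r : ℕ) (l : Fin r → MvPolynomial (Fin n) F),
      (∀ i, ∀ g ∈ G,
        polyAct ((g⁻¹ : Matrix.GeneralLinearGroup (Fin n) F) : Matrix (Fin n) (Fin n) F)
          (l i) = l i) →
      (∀ u v : Fin n → F,
        (¬ ∃ g ∈ G, (g : Matrix (Fin n) (Fin n) F).mulVec u = v) →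
        ∃ i, eval u (l i) ≠ eval v (l i)) →
      Nat.clog q k ≤ r) := by
  intro t'
  replace horb : ∀ j, ∃ w, W j = matrixOrbit G w := horb
  refine ⟨fun i g hg => ?_, fun u v huv => ?_, fun i => ?_, fun r l _ hsep => ?_⟩
  · exact polyAct_sum_C_mul_fOrb horb hmono (G.inv_mem hg) (a i)
  · exact exists_eval_sum_C_mul_fOrb_ne horb hcover hdisj hcols huv
  · exact hq ▸ totalDegree_sum_C_mul_fOrb_le W (a i)
  · simpa [hq] using clog_card_le_of_separating horb hdisj hsep
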